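/- (Non-vanishing of the Jacobian determinant; key step in proving analyticity of the limiting density.) Assume 0 < c ≤ 1 and let x > 0 be real. Suppose (x, m, g) satisfies system (S) with Im m > 0, Im g > 0, V ≤ x, V₀ > 0, and with A₁, A₂, B₁, B₂ finite. Define the complex quantities Â_j = ∫ s·t^(j−1)/(1 + s·g + t·m)² dH(s,t) for j = 1,2 and B̂_j = ∫ t^j/(1 + s·g + t·m)² dH(s,t) for j = 1,2. Then (x − c·B̂₁)·(g⁻² − c·Â₂) − c²·Â₁·B̂₂ ≠ 0. -/

import Mathlib

open MeasureTheory Complex Filter Topology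

noncomputable section

/-- The denominator `1 + s·g + t·m` appearing in system (S). -/
def den (m g : ℂ) (p : ℝ × ℝ) : ℂ := 1 + p.1 * g + p.2 * m

/-- `A₁ = ∫ s/|1+s·g+t·m|² dH`. -/
def A1 (H : Measure (ℝ × ℝ)) (m g : ℂ) : ℝ :=
  ∫ p, p.1 / ‖den m g p‖ ^ 2 ∂H

/-- `A₂ = ∫ s·t/|1+s·g+t·m|² dH`. -/
def A2 (H : Measure (ℝ × ℝ)) (m g : ℂ) : ℝ :=
  ∫ p, p.1 * p.2 / ‖den m g p‖ ^ 2 ∂H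

/-- `B_j = ∫ t^j/|1+s·g+t·m|² dH`. -/
def B (H : Measure (ℝ × ℝ)) (m g : ℂ) (j : ℕ) : ℝ :=
  ∫ p, p.2 ^ j / ‖den m g p‖ ^ 2 ∂H

/-- `V₀ = |g|⁻² − c·A₂`. -/
def V0 (H : Measure (ℝ × ℝ)) (c : ℝ) (m g : ℂ) : ℝ :=
  (‖g‖ ^ 2)⁻¹ - c * A2 H m g

/-- `V = c²·A₁·B₂/V₀ + c·B₁`. -/
def V (H : Measure (ℝ × ℝ)) (c : ℝ) (m g : ℂ) : ℝ :=
  c ^ 2 * A1 H m g * B H m g 2 / V0 H c m g + c * B H m g 1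

/-- `(z, m, g)` satisfies system (S): `g ≠ 0`, the denominator is a.e. nonzero, the two
integrands are integrable, and the two equations hold. -/
def SatS (H : Measure (ℝ × ℝ)) (c : ℝ) (z m g : ℂ) : Prop :=
  g ≠ 0 ∧ (∀ᵐ p ∂H, den m g p ≠ 0) ∧
    Integrable (fun p => (den m g p)⁻¹) H ∧
    Integrable (fun p => (p.2 : ℂ) / den m g p) H ∧
    z * m + (1 - (c : ℂ)) + c * ∫ p, (den m g p)⁻¹ ∂H = 0 ∧
    z + 1 / g - c * ∫ p, (p.2 : ℂ) / den m g p ∂H = 0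

/-- Integrability of the integrand of `A₁`. -/
def IntA1 (H : Measure (ℝ × ℝ)) (m g : ℂ) : Prop :=
  Integrable (fun p : ℝ × ℝ => p.1 / ‖den m g p‖ ^ 2) H

/-- Integrability of the integrand of `A₂`. -/
def IntA2 (H : Measure (ℝ × ℝ)) (m g : ℂ) : Prop :=
  Integrable (fun p : ℝ × ℝ => p.1 * p.2 / ‖den m g p‖ ^ 2) H

/-- Integrability of the integrand of `B_j`. -/
def IntB (H : Measure (ℝ × ℝ)) (m g : ℂ) (j : ℕ) : Prop :=
  Integrable (fun p : ℝ × ℝ => p.2 ^ j / ‖den m g p‖ ^ 2) H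

/-!
If the Jacobian vanished, then `‖x - c B̂₁‖ ‖g⁻² - c Â₂‖ = c² ‖Â₁‖ ‖B̂₂‖ ≤ c² A₁ B₂ ≤ (x - c B₁) V₀`
by `V ≤ x`, while `‖g⁻² - c Â₂‖ ≥ |g|⁻² - c A₂ = V₀ > 0`. Hence `‖x - c B̂₁‖ ≤ x - c B₁`, and
comparing real parts gives `Re B̂₁ ≥ B₁ ≥ ‖B̂₁‖`: equality holds in
`‖∫ t / (1 + s g + t m)² dH‖ ≤ ∫ t / |1 + s g + t m|² dH`, so `t / (1 + s g + t m)²` is a.e. a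
nonnegative real. Where `t > 0` the denominator has positive imaginary part, so its square is not a
positive real; thus `t = 0` `H`-a.e., and the second equation of (S) degenerates to `x + 1/g = 0`,
contradicting `Im g > 0`.
-/

open scoped ComplexOrder

section

variable {α : Type*} [MeasurableSpace α] {μ : Measure α}

lemma norm_ofReal_div_sq {a : ℝ} (ha : 0 ≤ a) (w : ℂ) : ‖(a : ℂ) / w ^ 2‖ = a / ‖w‖ ^ 2 := by
  rw [norm_div, norm_pow, Complex.norm_of_nonneg ha]

lemma integral_norm_ofReal_div_sq {φ : α → ℝ} (hφ : 0 ≤ᵐ[μ] φ) (d : α → ℂ) :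
    ∫ p, ‖(φ p : ℂ) / d p ^ 2‖ ∂μ = ∫ p, φ p / ‖d p‖ ^ 2 ∂μ :=
  integral_congr_ae (hφ.mono fun _ hp => norm_ofReal_div_sq hp _)

lemma norm_integral_ofReal_div_sq_le {φ : α → ℝ} (hφ : 0 ≤ᵐ[μ] φ) (d : α → ℂ) :
    ‖∫ p, (φ p : ℂ) / d p ^ 2 ∂μ‖ ≤ ∫ p, φ p / ‖d p‖ ^ 2 ∂μ :=
  (norm_integral_le_integral_norm _).trans_eq (integral_norm_ofReal_div_sq hφ d)

lemma MeasureTheory.Integrable.ofReal_div_sq {φ : α → ℝ} {d : α → ℂ} (hφm : AEMeasurable φ μ)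
    (hdm : AEMeasurable d μ) (hφ : 0 ≤ᵐ[μ] φ)
    (hi : Integrable (fun p => φ p / ‖d p‖ ^ 2) μ) :
    Integrable (fun p => (φ p : ℂ) / d p ^ 2) μ := by
  refine (integrable_norm_iff ?_).mp (hi.congr ?_)
  · exact ((Complex.measurable_ofReal.comp_aemeasurable hφm).div
      (hdm.pow_const 2)).aestronglyMeasurable
  · filter_upwards [hφ] with p hp using (norm_ofReal_div_sq hp _).symm

lemma ae_re_eq_norm_of_integral_norm_le_re {f : α → ℂ} (hf : Integrable f μ)
    (h : ∫ p, ‖f p‖ ∂μ ≤ (∫ p, f p ∂μ).re) : ∀ᵐ p ∂μ, (f p).re = ‖f p‖ := by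
  have hf_re : Integrable (fun p => (f p).re) μ := hf.re
  have hgap : Integrable (fun p => ‖f p‖ - (f p).re) μ := hf.norm.sub hf_re
  have hgap_nonneg : 0 ≤ᵐ[μ] fun p => ‖f p‖ - (f p).re :=
    Eventually.of_forall fun p => sub_nonneg.mpr (Complex.re_le_norm (f p))
  have hgap_zero : ∫ p, ‖f p‖ - (f p).re ∂μ = 0 := by
    refine le_antisymm ?_ (integral_nonneg_of_ae hgap_nonneg)
    have hre : ∫ p, (f p).re ∂μ = (∫ p, f p ∂μ).re := integral_re hf
    rw [integral_sub hf.norm hf_re, hre]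
    exact sub_nonpos.mpr h
  filter_upwards [(integral_eq_zero_iff_of_nonneg_ae hgap_nonneg hgap).mp hgap_zero] with p hp
  exact (sub_eq_zero.mp hp).symm

end

lemma Complex.im_eq_zero_of_re_ofReal_div_sq_eq_norm {t : ℝ} (ht : 0 < t) {w : ℂ}
    (h : ((t : ℂ) / w ^ 2).re = ‖(t : ℂ) / w ^ 2‖) : w.im = 0 := by
  rw [Complex.re_eq_norm] at h
  have hw : (w ^ 2)⁻¹ = (t : ℂ)⁻¹ * (t / w ^ 2) := by
    have : (t : ℂ) ≠ 0 := Complex.ofReal_ne_zero.mpr ht.ne'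
    field_simp
  rw [← Complex.sq_nonneg_iff, ← inv_nonneg, hw]
  exact mul_nonneg (inv_nonneg.mpr (Complex.zero_le_real.mpr ht.le)) h

lemma measurable_den (m g : ℂ) : Measurable (den m g) := by
  unfold den
  fun_prop

lemma im_den (m g : ℂ) (p : ℝ × ℝ) : (den m g p).im = p.1 * g.im + p.2 * m.im := by
  simp [den]

section

variable {H : Measure (ℝ × ℝ)} {c x : ℝ} {m g : ℂ}

lemma B_one_le_re_of_jacobian_eq_zero (hHsupp : ∀ᵐ p ∂H, 0 ≤ p.1 ∧ 0 ≤ p.2) (hc : 0 < c)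
    (hV : V H c m g ≤ x) (hV0 : 0 < V0 H c m g)
    (hdet : ((x : ℂ) - c * ∫ p, (p.2 : ℂ) / den m g p ^ 2 ∂H) *
        ((g ^ 2)⁻¹ - c * ∫ p, (p.1 : ℂ) * p.2 / den m g p ^ 2 ∂H) =
      (c : ℂ) ^ 2 * (∫ p, (p.1 : ℂ) / den m g p ^ 2 ∂H) *
        (∫ p, (p.2 : ℂ) ^ 2 / den m g p ^ 2 ∂H)) :
    B H m g 1 ≤ (∫ p, (p.2 : ℂ) / den m g p ^ 2 ∂H).re := by
  set b₁ := ∫ p, (p.2 : ℂ) / den m g p ^ 2 ∂H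
  set a₂ := ∫ p, (p.1 : ℂ) * p.2 / den m g p ^ 2 ∂H
  have hs : ∀ᵐ p ∂H, 0 ≤ p.1 := hHsupp.mono fun _ hp => hp.1
  have ht : ∀ᵐ p ∂H, 0 ≤ p.2 := hHsupp.mono fun _ hp => hp.2
  have ha₁ : ‖∫ p, (p.1 : ℂ) / den m g p ^ 2 ∂H‖ ≤ A1 H m g :=
    norm_integral_ofReal_div_sq_le hs (den m g)
  have ha₂ : ‖a₂‖ ≤ A2 H m g := by
    simpa [A2] using norm_integral_ofReal_div_sq_le (φ := fun p => p.1 * p.2)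
      (hHsupp.mono fun _ hp => mul_nonneg hp.1 hp.2) (den m g)
  have hb₂ : ‖∫ p, (p.2 : ℂ) ^ 2 / den m g p ^ 2 ∂H‖ ≤ B H m g 2 := by
    simpa [B] using norm_integral_ofReal_div_sq_le (φ := fun p => p.2 ^ 2)
      (ht.mono fun _ hp => pow_nonneg hp 2) (den m g)
  have hV0_le : V0 H c m g ≤ ‖(g ^ 2)⁻¹ - c * a₂‖ := calc
    V0 H c m g ≤ ‖(g ^ 2)⁻¹‖ - ‖(c : ℂ) * a₂‖ := by
      rw [V0, norm_inv, norm_pow, norm_mul, Complex.norm_of_nonneg hc.le]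
      gcongr
    _ ≤ _ := norm_sub_norm_le _ _
  have hVx : c ^ 2 * A1 H m g * B H m g 2 ≤ (x - c * B H m g 1) * V0 H c m g := by
    rw [← div_le_iff₀ hV0]
    rw [V] at hV
    linarith
  have hlen : ‖(x : ℂ) - c * b₁‖ * V0 H c m g ≤ (x - c * B H m g 1) * V0 H c m g := calc
    _ ≤ ‖(x : ℂ) - c * b₁‖ * ‖(g ^ 2)⁻¹ - c * a₂‖ := by gcongr
    _ = c ^ 2 * ‖∫ p, (p.1 : ℂ) / den m g p ^ 2 ∂H‖ * ‖∫ p, (p.2 : ℂ) ^ 2 / den m g p ^ 2 ∂H‖ := by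
      rw [← norm_mul, hdet, norm_mul, norm_mul, norm_pow, Complex.norm_of_nonneg hc.le]
    _ ≤ c ^ 2 * A1 H m g * B H m g 2 := by
      gcongr
      exact mul_nonneg (sq_nonneg c) ((norm_nonneg _).trans ha₁)
    _ ≤ _ := hVx
  have hre : x - c * b₁.re ≤ x - c * B H m g 1 := by
    have := Complex.re_le_norm ((x : ℂ) - c * b₁)
    simp only [Complex.sub_re, Complex.ofReal_re, Complex.re_ofReal_mul] at this
    exact this.trans (le_of_mul_le_mul_right hlen hV0)
  exact le_of_mul_le_mul_left (by linarith) hc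

lemma ae_snd_eq_zero_of_B_one_le_re (hHsupp : ∀ᵐ p ∂H, 0 ≤ p.1 ∧ 0 ≤ p.2) (hm : 0 < m.im)
    (hg : 0 ≤ g.im) (hB1 : IntB H m g 1)
    (hre : B H m g 1 ≤ (∫ p, (p.2 : ℂ) / den m g p ^ 2 ∂H).re) : ∀ᵐ p ∂H, p.2 = 0 := by
  have ht : ∀ᵐ p ∂H, 0 ≤ p.2 := hHsupp.mono fun _ hp => hp.2
  have hint : Integrable (fun p : ℝ × ℝ => (p.2 : ℂ) / den m g p ^ 2) H :=
    .ofReal_div_sq measurable_snd.aemeasurable (measurable_den m g).aemeasurable ht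
      (by simpa [IntB] using hB1)
  have hnorm : ∫ p, ‖(p.2 : ℂ) / den m g p ^ 2‖ ∂H = B H m g 1 := by
    simpa [B] using integral_norm_ofReal_div_sq ht (den m g)
  filter_upwards [ae_re_eq_norm_of_integral_norm_le_re hint (hnorm.trans_le hre), hHsupp]
    with p hp hp_nonneg
  by_contra ht_ne
  have ht_pos : 0 < p.2 := hp_nonneg.2.lt_of_ne' ht_ne
  have him := Complex.im_eq_zero_of_re_ofReal_div_sq_eq_norm ht_pos hp
  rw [im_den] at him
  nlinarith [mul_nonneg hp_nonneg.1 hg, mul_pos ht_pos hm]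

end

theorem stmt9_general (H : Measure (ℝ × ℝ))
    (hHsupp : ∀ᵐ p ∂H, 0 ≤ p.1 ∧ 0 ≤ p.2)
    (c : ℝ) (hc : 0 < c)
    (x : ℝ)
    (m g : ℂ) (hS : SatS H c (x : ℂ) m g)
    (hm : 0 < m.im) (hg : 0 < g.im)
    (hV : V H c m g ≤ x) (hV0 : 0 < V0 H c m g)
    (hB1 : IntB H m g 1) :
    ((x : ℂ) - c * ∫ p, (p.2 : ℂ) / den m g p ^ 2 ∂H) *
        ((g ^ 2)⁻¹ - c * ∫ p, (p.1 : ℂ) * p.2 / den m g p ^ 2 ∂H) -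
      (c : ℂ) ^ 2 * (∫ p, (p.1 : ℂ) / den m g p ^ 2 ∂H) *
        (∫ p, (p.2 : ℂ) ^ 2 / den m g p ^ 2 ∂H) ≠ 0 := by
  intro hdet
  have ht : ∀ᵐ p ∂H, p.2 = 0 := ae_snd_eq_zero_of_B_one_le_re hHsupp hm hg.le hB1
    (B_one_le_re_of_jacobian_eq_zero hHsupp hc hV hV0 (sub_eq_zero.mp hdet))
  have hI : ∫ p, (p.2 : ℂ) / den m g p ∂H = 0 :=
    integral_eq_zero_of_ae (ht.mono fun p hp => by simp [hp])
  have hx_add : (x : ℂ) + 1 / g = 0 := by simpa [hI] using hS.2.2.2.2.2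
  have hg_zero : g = 0 := by simpa [Complex.inv_im, hg.ne'] using congrArg Complex.im hx_add
  simp [hg_zero] at hg

theorem stmt9 (H : Measure (ℝ × ℝ)) [IsProbabilityMeasure H]
    (hHsupp : ∀ᵐ p ∂H, 0 ≤ p.1 ∧ 0 ≤ p.2)
    (c : ℝ) (hc : 0 < c) (hc1 : c ≤ 1)
    (x : ℝ) (hx : 0 < x)
    (m g : ℂ) (hS : SatS H c (x : ℂ) m g)
    (hm : 0 < m.im) (hg : 0 < g.im)
    (hV : V H c m g ≤ x) (hV0 : 0 < V0 H c m g)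
    (hA1 : IntA1 H m g) (hA2 : IntA2 H m g)
    (hB1 : IntB H m g 1) (hB2 : IntB H m g 2) :
    ((x : ℂ) - c * ∫ p, (p.2 : ℂ) / den m g p ^ 2 ∂H) *
        ((g ^ 2)⁻¹ - c * ∫ p, (p.1 : ℂ) * p.2 / den m g p ^ 2 ∂H) -
      (c : ℂ) ^ 2 * (∫ p, (p.1 : ℂ) / den m g p ^ 2 ∂H) *
        (∫ p, (p.2 : ℂ) ^ 2 / den m g p ^ 2 ∂H) ≠ 0 :=
  stmt9_general H hHsupp c hc x m g hS hm hg hV hV0 hB1
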